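/- For every M ≥ 1 there exist δ > 0 and a constant C such that for every positive integer n and all z, w ∈ ℂ with |z| ≤ 2, |w| ≤ 2 and M/√n ≤ |z·conj(w) − 1| ≤ δ, the Ginibre correlation kernel satisfies |K_n(z,w)| ≤ C·n·( e^{−n|z−w|²/2} + 1/(1 + √n·|z·conj(w) − 1|) ). -/

import Mathlib

/-- The Ginibre correlation kernel
`K_n(z,w) = n s_n(n z w̄) e^{−n(|z|²+|w|²)/2}` with `s_n(ζ) = Σ_{k<n} ζ^k/k!`. -/
noncomputable def ginibreKernel (n : ℕ) (z w : ℂ) : ℂ :=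
  (n : ℂ) * (∑ k ∈ Finset.range n, ((n : ℂ) * z * (starRingEnd ℂ) w) ^ k / (k.factorial : ℂ)) *
    Complex.exp (-(n : ℂ) * (((‖z‖ : ℝ) : ℂ) ^ 2 + ((‖w‖ : ℝ) : ℂ) ^ 2) / 2)

/-!
Put `ζ = z w̄` and `s_n(ζ) = Σ_{k<n} ζ^k/k!`. For `|ζ| ≤ 1` write `s_n(nζ) = e^{nζ} - tail`, where the
tail is `(nζ)ⁿ/n!` times `Σ_j c_j ζ^j` with `c_j = nʲ n!/(n+j)!` decreasing from `1`; for `|ζ| ≥ 1`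
read `s_n(nζ)` backwards from its top term, as `(nζ)ⁿ⁻¹/(n-1)!` times `Σ_j d_j ζ⁻ʲ` with
`d_j = (n-1)!/((n-1-j)! nʲ)` decreasing from `1`. Abel summation against the geometric sums, which
are at most `2/|q - 1|` on the closed unit disc, gives in both cases
`|s_n(nζ)| ≤ e^{n Re ζ} + (n|ζ|)ⁿ/n! · 2/|ζ - 1|`.
After multiplication by `e^{-n(|z|²+|w|²)/2}` the first term is exactly `e^{-n|z-w|²/2}`, while
Stirling's bound `n! ≥ √n (n/e)ⁿ`, `|ζ| ≤ e^{|ζ|-1}` and `|ζ| ≤ (|z|²+|w|²)/2` turn the second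
into at most `2/(√n |ζ - 1|)`, which is `≤ 4/(1 + √n |ζ - 1|)` as soon as `√n |ζ - 1| ≥ 1`.
-/

open Finset
open scoped Nat ComplexConjugate

theorem norm_geom_sum_le_of_norm_le_one {𝕜 : Type*} [NormedDivisionRing 𝕜] {q : 𝕜}
    (hq : ‖q‖ ≤ 1) (hq1 : q ≠ 1) (m : ℕ) : ‖∑ j ∈ range m, q ^ j‖ ≤ 2 / ‖q - 1‖ := by
  rw [geom_sum_eq hq1, norm_div]
  gcongr
  calc ‖q ^ m - 1‖ ≤ ‖q ^ m‖ + ‖(1 : 𝕜)‖ := norm_sub_le _ _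
    _ ≤ 1 + 1 := by
      rw [norm_pow, norm_one]
      gcongr
      exact pow_le_one₀ (norm_nonneg q) hq
    _ = 2 := one_add_one_eq_two

theorem Antitone.norm_sum_range_smul_le {E : Type*} [NormedAddCommGroup E] [NormedSpace ℝ E]
    {c : ℕ → ℝ} (hc : Antitone c) (hc0 : ∀ j, 0 ≤ c j) {z : ℕ → E} {B : ℝ}
    (hB : ∀ m, ‖∑ j ∈ range m, z j‖ ≤ B) (N : ℕ) :
    ‖∑ j ∈ range N, c j • z j‖ ≤ c 0 * B := by
  have hstep (i : ℕ) : ‖(c (i + 1) - c i) • ∑ j ∈ range (i + 1), z j‖ ≤ (c i - c (i + 1)) * B := by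
    have hdrop : 0 ≤ c i - c (i + 1) := sub_nonneg.2 (hc i.le_succ)
    rw [norm_smul, Real.norm_eq_abs, abs_sub_comm, abs_of_nonneg hdrop]
    exact mul_le_mul_of_nonneg_left (hB _) hdrop
  rw [sum_range_by_parts]
  calc _ ≤ ‖c (N - 1) • ∑ j ∈ range N, z j‖ +
        ∑ i ∈ range (N - 1), ‖(c (i + 1) - c i) • ∑ j ∈ range (i + 1), z j‖ :=
        (norm_sub_le _ _).trans (add_le_add_right (norm_sum_le _ _) _)
    _ ≤ c (N - 1) * B + ∑ i ∈ range (N - 1), (c i - c (i + 1)) * B := by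
        gcongr with i
        · rw [norm_smul, Real.norm_of_nonneg (hc0 _)]
          exact mul_le_mul_of_nonneg_left (hB N) (hc0 _)
        · exact hstep i
    _ = c 0 * B := by rw [← sum_mul, sum_range_sub']; ring

theorem norm_sum_range_ofReal_mul_pow_le {c : ℕ → ℝ} (hc : Antitone c) (hc0 : ∀ j, 0 ≤ c j)
    {q : ℂ} (hq : ‖q‖ ≤ 1) (hq1 : q ≠ 1) (N : ℕ) :
    ‖∑ j ∈ range N, (c j : ℂ) * q ^ j‖ ≤ c 0 * (2 / ‖q - 1‖) := by
  simpa only [Complex.real_smul] using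
    hc.norm_sum_range_smul_le hc0 (norm_geom_sum_le_of_norm_le_one hq hq1) N

noncomputable def expPartialSum (n : ℕ) (ζ : ℂ) : ℂ :=
  ∑ k ∈ range n, ζ ^ k / k !

theorem hasSum_exp_sub_expPartialSum (n : ℕ) (ζ : ℂ) :
    HasSum (fun j ↦ ζ ^ (j + n) / (j + n)!) (Complex.exp ζ - expPartialSum n ζ) := by
  rw [Complex.exp_eq_exp_ℂ]
  exact (hasSum_nat_add_iff' n).2 (NormedSpace.expSeries_div_hasSum_exp ζ)

theorem antitone_pow_div_ascFactorial (n : ℕ) :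
    Antitone fun j : ℕ ↦ (n : ℝ) ^ j / (n + 1).ascFactorial j := by
  refine antitone_nat_of_succ_le fun j ↦ ?_
  rw [pow_succ, Nat.ascFactorial_succ, Nat.cast_mul, mul_comm ((n + 1 + j : ℕ) : ℝ),
    ← div_mul_div_comm]
  refine mul_le_of_le_one_right (by positivity) ((div_le_one (by positivity)).2 ?_)
  push_cast
  linarith [(j.cast_nonneg : (0 : ℝ) ≤ j)]

theorem natCast_mul_pow_add_div_factorial (n j : ℕ) (ζ : ℂ) :
    ((n : ℂ) * ζ) ^ (j + n) / (j + n)! =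
      ((n : ℂ) * ζ) ^ n / n ! * ((((n : ℝ) ^ j / (n + 1).ascFactorial j : ℝ) : ℂ) * ζ ^ j) := by
  rw [add_comm j n, ← Nat.factorial_mul_ascFactorial]
  have : ((n + 1).ascFactorial j : ℂ) ≠ 0 := Nat.cast_ne_zero.2 (Nat.ascFactorial_pos n j).ne'
  push_cast
  field_simp
  ring

theorem norm_exp_sub_expPartialSum_le {ζ : ℂ} (hζ : ‖ζ‖ ≤ 1) (hζ1 : ζ ≠ 1) (n : ℕ) :
    ‖Complex.exp (n * ζ) - expPartialSum n (n * ζ)‖ ≤ (n * ‖ζ‖) ^ n / n ! * (2 / ‖ζ - 1‖) := by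
  refine le_of_tendsto' (hasSum_exp_sub_expPartialSum n _).tendsto_sum_nat.norm fun N ↦ ?_
  simp_rw [natCast_mul_pow_add_div_factorial, ← mul_sum, norm_mul]
  have hA : ‖((n : ℂ) * ζ) ^ n / (n ! : ℂ)‖ = (n * ‖ζ‖) ^ n / n ! := by
    simp only [norm_div, norm_pow, norm_mul, Complex.norm_natCast]
  rw [hA]
  gcongr
  simpa using norm_sum_range_ofReal_mul_pow_le (antitone_pow_div_ascFactorial n)
    (fun _ ↦ by positivity) hζ hζ1 N

theorem antitone_descFactorial_div_pow (m : ℕ) :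
    Antitone fun j : ℕ ↦ (m.descFactorial j : ℝ) / ((m + 1 : ℕ) : ℝ) ^ j := by
  refine antitone_nat_of_succ_le fun j ↦ ?_
  rw [pow_succ, Nat.descFactorial_succ, Nat.cast_mul, mul_comm ((m - j : ℕ) : ℝ),
    ← div_mul_div_comm]
  refine mul_le_of_le_one_right (by positivity) ((div_le_one (by positivity)).2 ?_)
  exact_mod_cast (m.sub_le j).trans m.le_succ

theorem natCast_mul_pow_sub_div_factorial {m j : ℕ} (hj : j ≤ m) {ζ : ℂ} (hζ : ζ ≠ 0) :
    (((m + 1 : ℕ) : ℂ) * ζ) ^ (m - j) / (m - j)! =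
      (((m + 1 : ℕ) : ℂ) * ζ) ^ m / m ! *
        ((((m.descFactorial j : ℝ) / ((m + 1 : ℕ) : ℝ) ^ j : ℝ) : ℂ) * ζ⁻¹ ^ j) := by
  have hpow : (((m + 1 : ℕ) : ℂ) * ζ) ^ m =
      (((m + 1 : ℕ) : ℂ) * ζ) ^ (m - j) * (((m + 1 : ℕ) : ℂ) * ζ) ^ j := by
    rw [← pow_add, Nat.sub_add_cancel hj]
  have : (m.descFactorial j : ℂ) ≠ 0 :=
    Nat.cast_ne_zero.2 (Nat.descFactorial_eq_zero_iff_lt.not.2 (not_lt.2 hj))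
  rw [hpow, ← Nat.factorial_mul_descFactorial hj]
  push_cast
  simp only [mul_pow, inv_pow]
  field_simp

theorem norm_expPartialSum_le_of_one_le_norm {ζ : ℂ} (hζ : 1 ≤ ‖ζ‖) (hζ1 : ζ ≠ 1) (n : ℕ) :
    ‖expPartialSum n (n * ζ)‖ ≤ (n * ‖ζ‖) ^ n / n ! * (2 / ‖ζ - 1‖) := by
  obtain _ | m := n
  · simp only [expPartialSum, range_zero, sum_empty, norm_zero]
    positivity
  have hζ0 : ζ ≠ 0 := norm_pos_iff.1 (zero_lt_one.trans_le hζ)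
  have hinv : ‖ζ⁻¹ - 1‖ = ‖ζ - 1‖ / ‖ζ‖ := by
    rw [← norm_div, sub_div, div_self hζ0, inv_eq_one_div, norm_sub_rev, ← norm_neg]
  have hsum : expPartialSum (m + 1) ((m + 1 : ℕ) * ζ) = (((m + 1 : ℕ) : ℂ) * ζ) ^ m / m ! *
      ∑ j ∈ range (m + 1),
        (((m.descFactorial j : ℝ) / ((m + 1 : ℕ) : ℝ) ^ j : ℝ) : ℂ) * ζ⁻¹ ^ j := by
    rw [expPartialSum, ← sum_range_reflect, mul_sum]
    refine sum_congr rfl fun j hj ↦ ?_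
    exact natCast_mul_pow_sub_div_factorial (Nat.le_of_lt_succ (mem_range.1 hj)) hζ0
  have hq : ‖ζ⁻¹‖ ≤ 1 := by rw [norm_inv]; exact inv_le_one_of_one_le₀ hζ
  have habel := norm_sum_range_ofReal_mul_pow_le (antitone_descFactorial_div_pow m)
    (fun _ ↦ by positivity) hq (inv_ne_one.2 hζ1) (m + 1)
  rw [hsum, norm_mul]
  calc _ ≤ ((m + 1 : ℕ) * ‖ζ‖) ^ m / m ! * (2 / ‖ζ⁻¹ - 1‖) := by
        gcongr
        · simp only [norm_div, norm_pow, norm_mul, Complex.norm_natCast, le_refl]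
        · simpa using habel
    _ = _ := by
        rw [hinv, Nat.factorial_succ, pow_succ]
        push_cast
        field_simp

theorem norm_expPartialSum_le {ζ : ℂ} (hζ1 : ζ ≠ 1) (n : ℕ) :
    ‖expPartialSum n (n * ζ)‖ ≤ Real.exp (n * ζ.re) + (n * ‖ζ‖) ^ n / n ! * (2 / ‖ζ - 1‖) := by
  rcases le_total ‖ζ‖ 1 with hζ | hζ
  · have hexp : ‖Complex.exp (n * ζ)‖ = Real.exp (n * ζ.re) := by
      simp [Complex.norm_exp]
    calc ‖expPartialSum n (n * ζ)‖
        ≤ ‖Complex.exp (n * ζ)‖ + ‖Complex.exp (n * ζ) - expPartialSum n (n * ζ)‖ :=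
          norm_le_insert _ _
      _ ≤ _ := by rw [hexp]; gcongr; exact norm_exp_sub_expPartialSum_le hζ hζ1 n
  · exact (norm_expPartialSum_le_of_one_le_norm hζ hζ1 n).trans
      (le_add_of_nonneg_left (Real.exp_pos _).le)

theorem natCast_mul_pow_div_factorial_le {n : ℕ} (hn : n ≠ 0) {r : ℝ} (hr : 0 ≤ r) :
    (n * r) ^ n / n ! ≤ Real.exp (n * r) / √n := by
  have hn' : (0 : ℝ) < n := Nat.cast_pos.2 (Nat.pos_of_ne_zero hn)
  have hfact : √n * (n / Real.exp 1) ^ n ≤ n ! :=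
    le_trans (by gcongr; nlinarith [Real.pi_gt_three]) (Stirling.le_factorial_stirling n)
  have hpow : r ^ n ≤ Real.exp (n * (r - 1)) := by
    rw [Real.exp_nat_mul]
    gcongr
    linarith [Real.add_one_le_exp (r - 1)]
  calc (n * r) ^ n / n ! ≤ (n * r) ^ n / (√n * (n / Real.exp 1) ^ n) := by gcongr
    _ = r ^ n * Real.exp 1 ^ n / √n := by rw [mul_pow, div_pow]; field_simp
    _ ≤ Real.exp (n * (r - 1)) * Real.exp 1 ^ n / √n := by gcongr
    _ = Real.exp (n * r) / √n := by rw [← Real.exp_nat_mul, ← Real.exp_add]; ring_nf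

theorem norm_ginibreKernel (n : ℕ) (z w : ℂ) :
    ‖ginibreKernel n z w‖ =
      n * ‖expPartialSum n (n * (z * conj w))‖ * Real.exp (-n * (‖z‖ ^ 2 + ‖w‖ ^ 2) / 2) := by
  rw [ginibreKernel, norm_mul, norm_mul, Complex.norm_natCast, Complex.norm_exp, expPartialSum]
  simp only [mul_assoc]
  norm_cast

theorem norm_ginibreKernel_le {n : ℕ} (hn : n ≠ 0) {z w : ℂ} (hzw : z * conj w ≠ 1) :
    ‖ginibreKernel n z w‖ ≤
      n * (Real.exp (-n * ‖z - w‖ ^ 2 / 2) + 2 / (√n * ‖z * conj w - 1‖)) := by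
  set ζ := z * conj w
  set G := Real.exp (-n * (‖z‖ ^ 2 + ‖w‖ ^ 2) / 2)
  have hgauss : Real.exp (n * ζ.re) * G = Real.exp (-n * ‖z - w‖ ^ 2 / 2) := by
    have hsq : ‖z - w‖ ^ 2 = ‖z‖ ^ 2 + ‖w‖ ^ 2 - 2 * ζ.re := by
      simpa only [Complex.normSq_eq_norm_sq] using Complex.normSq_sub z w
    rw [hsq, ← Real.exp_add]
    ring_nf
  have hstirling : (n * ‖ζ‖) ^ n / n ! * G ≤ 1 / √n := by
    have hamgm : ‖ζ‖ ≤ (‖z‖ ^ 2 + ‖w‖ ^ 2) / 2 := by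
      rw [norm_mul, Complex.norm_conj]
      nlinarith [sq_nonneg (‖z‖ - ‖w‖)]
    calc (n * ‖ζ‖) ^ n / n ! * G ≤ Real.exp (n * ‖ζ‖) / √n * G := by
          gcongr ?_ * G
          exact natCast_mul_pow_div_factorial_le hn (norm_nonneg ζ)
      _ = Real.exp (n * (‖ζ‖ - (‖z‖ ^ 2 + ‖w‖ ^ 2) / 2)) / √n := by
          rw [div_mul_eq_mul_div, ← Real.exp_add]; ring_nf
      _ ≤ 1 / √n := by
          gcongr
          exact Real.exp_le_one_iff.2 (mul_nonpos_of_nonneg_of_nonpos n.cast_nonneg (by linarith))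
  calc ‖ginibreKernel n z w‖ = n * ‖expPartialSum n (n * ζ)‖ * G := norm_ginibreKernel n z w
    _ ≤ n * (Real.exp (n * ζ.re) + (n * ‖ζ‖) ^ n / n ! * (2 / ‖ζ - 1‖)) * G := by
        gcongr; exact norm_expPartialSum_le hzw n
    _ = n * (Real.exp (n * ζ.re) * G + (n * ‖ζ‖) ^ n / n ! * G * (2 / ‖ζ - 1‖)) := by ring
    _ ≤ n * (Real.exp (-n * ‖z - w‖ ^ 2 / 2) + 1 / √n * (2 / ‖ζ - 1‖)) := by
        rw [hgauss]; gcongr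
    _ = _ := by rw [div_mul_div_comm, one_mul]

/-- Kernel estimate near the diagonal `z w̄ = 1`: for every `M ≥ 1` there are `δ > 0` and
`C` with `|K_n(z,w)| ≤ C n (e^{−n|z−w|²/2} + 1/(1 + √n |z w̄ − 1|))` whenever `|z| ≤ 2`,
`|w| ≤ 2` and `M/√n ≤ |z w̄ − 1| ≤ δ`. -/
theorem ginibreKernel_estimate_near_one (M : ℝ) (hM : 1 ≤ M) :
    ∃ δ : ℝ, 0 < δ ∧ ∃ C : ℝ, ∀ n : ℕ, 1 ≤ n → ∀ z w : ℂ,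
      ‖z‖ ≤ 2 → ‖w‖ ≤ 2 →
      M / Real.sqrt n ≤ ‖z * (starRingEnd ℂ) w - 1‖ →
      ‖z * (starRingEnd ℂ) w - 1‖ ≤ δ →
      ‖ginibreKernel n z w‖ ≤
        C * n * (Real.exp (-(n : ℝ) * ‖z - w‖ ^ 2 / 2) +
          1 / (1 + Real.sqrt n * ‖z * (starRingEnd ℂ) w - 1‖)) := by
  refine ⟨1, one_pos, 4, fun n hn z w _ _ hlow _ ↦ ?_⟩
  set x := √n * ‖z * conj w - 1‖
  have hsqrt : 0 < √(n : ℝ) := Real.sqrt_pos.2 (Nat.cast_pos.2 hn)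
  have hx : 1 ≤ x := hM.trans ((div_le_iff₀' hsqrt).1 hlow)
  have hzw : z * conj w ≠ 1 := fun h ↦ by norm_num [x, h] at hx
  have hfrac : 2 / x ≤ 4 * (1 / (1 + x)) := by
    rw [mul_one_div, div_le_div_iff₀ (by positivity) (by positivity)]
    linarith
  calc ‖ginibreKernel n z w‖ ≤ n * (Real.exp (-n * ‖z - w‖ ^ 2 / 2) + 2 / x) :=
        norm_ginibreKernel_le (Nat.one_le_iff_ne_zero.1 hn) hzw
    _ ≤ n * (4 * Real.exp (-n * ‖z - w‖ ^ 2 / 2) + 4 * (1 / (1 + x))) := by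
        gcongr
        linarith [Real.exp_pos (-n * ‖z - w‖ ^ 2 / 2)]
    _ = _ := by ring
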